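/- Every vector field W on the big phase space can be decomposed as W = S • W + T(τ₋(W)), assuming the second-derivative string equation. -/

import Mathlib

open scoped BigOperators

/-- Abstract model of the big phase space of Gromov–Witten theory.
`R` is the ring of (formal) functions on the big phase space, `X` the module of
vector fields, `N` the dimension of `H^*(M;ℂ)` with basis `γ_1,…,γ_N`.
`frame m α` is the parallel coordinate vector field `τ_m(γ_α) = ∂/∂t_m^α`,
`t m α` the coordinate `t_m^α`, `comp W m α` the components of a vector field
in the parallel frame, `gammaUp α = γ^α` (indices raised by the intersection
form `eta`), `p0` the projection to the level-0 (primary) part, `tauPlus` and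
`tauMinus` the level-shifting operators, `nabla` the trivial flat connection,
`Dop V f` the action of a vector field on a function, `corr g l` the genus-`g`
correlation function `⟨⟨ l ⟩⟩_g` (the iterated covariant derivative of the
generating function `Fgen g` of genus-`g` Gromov–Witten invariants),
`Svf` the string vector field and `chi24 = χ(V)/24`. -/
structure GW (R : Type) [CommRing R] (X : Type) [AddCommGroup X] [Module R X]
    (N : ℕ) where
  frame : ℕ → Fin N → X
  t : ℕ → Fin N → R
  comp : X → ℕ → Fin N → R
  gammaUp : Fin N → X
  eta : X → X → R
  p0 : X → X
  tauPlus : X → X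
  tauMinus : X → X
  nabla : X → X → X
  Dop : X → R → R
  corr : ℕ → List X → R
  Svf : X
  chi24 : R
  Fgen : ℕ → R
  comp_frame : ∀ m α n β, comp (frame m α) n β = if m = n ∧ α = β then 1 else 0
  comp_add : ∀ V W n β, comp (V + W) n β = comp V n β + comp W n β
  comp_smul : ∀ (r : R) W n β, comp (r • W) n β = r * comp W n β
  comp_ext : ∀ V W, (∀ n β, comp V n β = comp W n β) → V = W
  comp_nabla : ∀ V W n β, comp (nabla V W) n β = Dop V (comp W n β)
  D_t : ∀ V m α, Dop V (t m α) = comp V m α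
  D_add : ∀ V r s, Dop V (r + s) = Dop V r + Dop V s
  D_mul : ∀ V r s, Dop V (r * s) = r * Dop V s + s * Dop V r
  D_addV : ∀ V W r, Dop (V + W) r = Dop V r + Dop W r
  D_smulV : ∀ (f : R) V r, Dop (f • V) r = f * Dop V r
  nabla_addV : ∀ U V W, nabla (U + V) W = nabla U W + nabla V W
  nabla_smulV : ∀ (f : R) V W, nabla (f • V) W = f • nabla V W
  nabla_add : ∀ V W W', nabla V (W + W') = nabla V W + nabla V W'
  nabla_leibniz : ∀ V (f : R) W, nabla V (f • W) = Dop V f • W + f • nabla V W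
  frame_parallel : ∀ V m α, nabla V (frame m α) = 0
  comp_tauPlus : ∀ W n β, comp (tauPlus W) (n + 1) β = comp W n β
  comp_tauPlus0 : ∀ W β, comp (tauPlus W) 0 β = 0
  comp_tauMinus : ∀ W n β, comp (tauMinus W) n β = comp W (n + 1) β
  comp_p0 : ∀ W n β, comp (p0 W) n β = if n = 0 then comp W 0 β else 0
  comp_S : ∀ n β, comp Svf n β
      = -(t (n + 1) β - if n = 0 ∧ (β : ℕ) = 0 then 1 else 0)
  tau_decomp : ∀ W, tauPlus (tauMinus W) + p0 W = W
  eta_symm : ∀ V W, eta V W = eta W V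
  eta_primary : ∀ V W, eta V W = eta (p0 V) (p0 W)
  eta_dual : ∀ W, (Finset.univ.sum fun α => eta W (gammaUp α) • frame 0 α) = p0 W
  gammaUp_primary : ∀ α, p0 (gammaUp α) = gammaUp α
  corr_perm : ∀ g (l l' : List X), l.Perm l' → corr g l = corr g l'
  corr_smul : ∀ g (r : R) W l, corr g ((r • W) :: l) = r * corr g (W :: l)
  corr_add : ∀ g V W l, corr g ((V + W) :: l) = corr g (V :: l) + corr g (W :: l)
  corr_nil : ∀ g, corr g [] = Fgen g
  corr_deriv : ∀ g W (l : List X),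
    Dop W (corr g l) = corr g (W :: l)
      + ∑ i ∈ Finset.range l.length, corr g (l.set i (nabla W (l.getD i 0)))

namespace GW

variable {R : Type} [CommRing R] [Algebra ℚ R] {X : Type} [AddCommGroup X]
  [Module R X] {N : ℕ} (G : GW R X N)

/-- `γ_α`, i.e. `τ_0(γ_α)`. -/
def ga (α : Fin N) : X := G.frame 0 α

/-- The quantum product `W₁ • W₂ := ⟨⟨W₁ W₂ γ^α⟩⟩₀ γ_α`. -/
def qp (V W : X) : X := ∑ α, G.corr 0 [V, W, G.gammaUp α] • G.ga α

/-- `T(W) := τ₊(W) − ⟨⟨W γ^α⟩⟩₀ γ_α`. -/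
def T (W : X) : X := G.tauPlus W - ∑ α, G.corr 0 [W, G.gammaUp α] • G.ga α

/-- A vector field is parallel if it is `∇`-parallel. -/
def parallel (W : X) : Prop := ∀ V, G.nabla V W = 0

/-- Covariant derivative of a 1-tensor. -/
def nabla1 (A : X → R) (V W : X) : R := G.Dop V (A W) - A (G.nabla V W)

/-- Covariant derivative of a 3-tensor. -/
def nabla3 (A : X → X → X → R) (V a b c : X) : R :=
  G.Dop V (A a b c) - A (G.nabla V a) b c - A a (G.nabla V b) c
    - A a b (G.nabla V c)

/-- Covariant derivative of a 4-tensor. -/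
def nabla4 (A : X → X → X → X → R) (V a b c d : X) : R :=
  G.Dop V (A a b c d) - A (G.nabla V a) b c d - A a (G.nabla V b) c d
    - A a b (G.nabla V c) d - A a b c (G.nabla V d)

/-- `ρ₀(W₁,W₂,W₃) := ⟨⟨T(W₁) W₂ W₃⟩⟩₀`, the genus-0 TRR tensor. -/
def rho0 (a b c : X) : R := G.corr 0 [G.T a, b, c]

/-- The associativity tensor
`C₀(W₁,W₂,W₃,W₄) = ⟨⟨(W₁•W₂)W₃W₄⟩⟩₀ − ⟨⟨W₁(W₂•W₃)W₄⟩⟩₀`. -/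
def C0 (a b c d : X) : R :=
  G.corr 0 [G.qp a b, c, d] - G.corr 0 [a, G.qp b c, d]

/-- `C₁(W₁,…,W₅) := (∇_{W₅} C₀)(W₁,…,W₄)`. -/
def C1 (a b c d e : X) : R := G.nabla4 G.C0 e a b c d

/-- `ρ₁(W) := ⟨⟨T(W)⟩⟩₁ − (1/24)⟨⟨W γ^α γ_α⟩⟩₀`, the genus-1 TRR tensor. -/
def rho1 (W : X) : R :=
  G.corr 1 [G.T W] - (1/24 : ℚ) • ∑ α, G.corr 0 [W, G.gammaUp α, G.ga α]

/-- Getzler's genus-1 tensor `G(W₁,W₂,W₃,W₄)`. -/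
def Gt (W : Fin 4 → X) : R :=
  ∑ σ : Equiv.Perm (Fin 4),
    ((3 : ℚ) • G.corr 1 [G.qp (W (σ 0)) (W (σ 1)), G.qp (W (σ 2)) (W (σ 3))]
    - (4 : ℚ) • G.corr 1 [G.qp (W (σ 0)) (G.qp (W (σ 1)) (W (σ 2))), W (σ 3)]
    - ∑ α, G.corr 0 [G.qp (W (σ 0)) (W (σ 1)), W (σ 2), W (σ 3), G.gammaUp α]
        * G.corr 1 [G.ga α]
    + (2 : ℚ) • ∑ α, G.corr 0 [W (σ 0), W (σ 1), W (σ 2), G.gammaUp α]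
        * G.corr 1 [G.qp (G.ga α) (W (σ 3))]
    + (1/6 : ℚ) • ∑ α, ∑ β,
        G.corr 0 [W (σ 0), W (σ 1), W (σ 2), G.gammaUp α]
          * G.corr 0 [G.ga α, W (σ 3), G.ga β, G.gammaUp β]
    + (1/24 : ℚ) • ∑ α, ∑ β,
        G.corr 0 [W (σ 0), W (σ 1), W (σ 2), W (σ 3), G.gammaUp α]
          * G.corr 0 [G.ga α, G.ga β, G.gammaUp β]
    - (1/4 : ℚ) • ∑ α, ∑ β,
        G.corr 0 [W (σ 0), W (σ 1), G.gammaUp α, G.gammaUp β]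
          * G.corr 0 [G.ga α, G.ga β, W (σ 2), W (σ 3)])

/-- The genus-1 tensor `A₁` from the genus-2 Mumford relation. -/
def A1 (W : X) : R :=
  (7/10 : ℚ) • ∑ α, G.corr 1 [G.ga α] * G.corr 1 [G.qp (G.gammaUp α) W]
  + (1/10 : ℚ) • ∑ α, G.corr 1 [G.ga α, G.qp (G.gammaUp α) W]
  - (1/240 : ℚ) • G.corr 1 [W, ∑ α, G.qp (G.ga α) (G.gammaUp α)]
  + (13/240 : ℚ) • ∑ α, ∑ β,
      G.corr 0 [W, G.ga α, G.gammaUp α, G.gammaUp β] * G.corr 1 [G.ga β]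
  + (1/960 : ℚ) • ∑ α, ∑ β,
      G.corr 0 [W, G.gammaUp α, G.ga α, G.gammaUp β, G.ga β]

/-- The genus-1 tensor `A₂` from Getzler's genus-2 relation. -/
def A2 (W V : X) : R :=
  (13/10 : ℚ) • ∑ α, ∑ β,
      G.corr 0 [W, V, G.gammaUp α, G.gammaUp β]
        * G.corr 1 [G.ga α] * G.corr 1 [G.ga β]
  + (4/5 : ℚ) • ∑ α, G.corr 1 [W, G.gammaUp α] * G.corr 1 [G.qp (G.ga α) V]
  + (4/5 : ℚ) • ∑ α, G.corr 1 [V, G.gammaUp α] * G.corr 1 [G.qp (G.ga α) W]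
  - (4/5 : ℚ) • ∑ α, G.corr 1 [G.qp W V, G.gammaUp α] * G.corr 1 [G.ga α]
  + (23/240 : ℚ) • ∑ α, ∑ β,
      G.corr 0 [W, V, G.gammaUp α, G.ga α, G.gammaUp β] * G.corr 1 [G.ga β]
  + (1/48 : ℚ) • ∑ α, ∑ β,
      G.corr 0 [W, G.gammaUp α, G.ga α, G.gammaUp β] * G.corr 1 [G.ga β, V]
  + (1/48 : ℚ) • ∑ α, ∑ β,
      G.corr 0 [V, G.gammaUp α, G.ga α, G.gammaUp β] * G.corr 1 [G.ga β, W]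
  - (1/80 : ℚ) • G.corr 1 [W, V, ∑ α, G.qp (G.gammaUp α) (G.ga α)]
  + (7/30 : ℚ) • ∑ α, ∑ β,
      G.corr 0 [W, V, G.gammaUp α, G.gammaUp β] * G.corr 1 [G.ga α, G.ga β]
  + (1/30 : ℚ) • ∑ α, G.corr 1 [G.ga α, G.qp (G.gammaUp α) W, V]
  + (1/30 : ℚ) • ∑ α, G.corr 1 [G.ga α, G.qp (G.gammaUp α) V, W]
  - (1/30 : ℚ) • ∑ α, G.corr 1 [G.qp W V, G.ga α, G.gammaUp α]
  + (1/576 : ℚ) • ∑ α, ∑ β,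
      G.corr 0 [W, V, G.gammaUp α, G.ga α, G.gammaUp β, G.ga β]

/-- The genus-1 tensor `B` from the Belorousski–Pandharipande relation. -/
def B (W1 W2 W3 : X) : R :=
  (1/5 : ℚ) • ∑ α, ∑ β,
      G.corr 0 [W1, W2, W3, G.gammaUp α, G.gammaUp β]
        * G.corr 1 [G.ga α] * G.corr 1 [G.ga β]
  - (6/5 : ℚ) • ∑ α, ∑ β,
      G.corr 0 [W1, W2, W3, G.gammaUp α]
        * G.corr 1 [G.ga α, G.gammaUp β] * G.corr 1 [G.ga β]
  + (1/120 : ℚ) • ∑ α, ∑ β,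
      G.corr 0 [W1, W2, W3, G.gammaUp α, G.ga α, G.gammaUp β]
        * G.corr 1 [G.ga β]
  - (1/120 : ℚ) • G.corr 1 [W1, W2, W3, ∑ α, G.qp (G.gammaUp α) (G.ga α)]
  + (1/10 : ℚ) • ∑ α, ∑ β,
      G.corr 0 [W1, W2, W3, G.gammaUp α, G.gammaUp β]
        * G.corr 1 [G.ga α, G.ga β]
  - (1/20 : ℚ) • ∑ α, ∑ β,
      G.corr 0 [W1, W2, W3, G.gammaUp α]
        * G.corr 1 [G.ga α, G.gammaUp β, G.ga β]
  - (1/5 : ℚ) • ∑ σ : Equiv.Perm (Fin 3), ∑ α, ∑ β,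
      G.corr 0 [![W1,W2,W3] (σ 0), ![W1,W2,W3] (σ 1), G.gammaUp α, G.gammaUp β]
        * G.corr 1 [G.ga α] * G.corr 1 [G.ga β, ![W1,W2,W3] (σ 2)]
  + (2/5 : ℚ) • ∑ σ : Equiv.Perm (Fin 3), ∑ α,
      G.corr 1 [G.qp (![W1,W2,W3] (σ 0)) (G.ga α)]
        * G.corr 1 [G.gammaUp α, ![W1,W2,W3] (σ 1), ![W1,W2,W3] (σ 2)]
  - (3/5 : ℚ) • ∑ σ : Equiv.Perm (Fin 3), ∑ α,
      G.corr 1 [![W1,W2,W3] (σ 0), G.qp (![W1,W2,W3] (σ 1)) (G.gammaUp α)]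
        * G.corr 1 [G.ga α, ![W1,W2,W3] (σ 2)]
  + (3/10 : ℚ) • ∑ σ : Equiv.Perm (Fin 3), ∑ α,
      G.corr 1 [![W1,W2,W3] (σ 0), G.ga α]
        * G.corr 1 [G.gammaUp α, G.qp (![W1,W2,W3] (σ 1)) (![W1,W2,W3] (σ 2))]
  - (1/5 : ℚ) • ∑ σ : Equiv.Perm (Fin 3), ∑ α,
      G.corr 1 [G.ga α]
        * G.corr 1 [G.gammaUp α, ![W1,W2,W3] (σ 0),
            G.qp (![W1,W2,W3] (σ 1)) (![W1,W2,W3] (σ 2))]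
  - (1/80 : ℚ) • ∑ σ : Equiv.Perm (Fin 3), ∑ α, ∑ β,
      G.corr 0 [![W1,W2,W3] (σ 0), ![W1,W2,W3] (σ 1), G.gammaUp α, G.ga α,
          G.gammaUp β]
        * G.corr 1 [G.ga β, ![W1,W2,W3] (σ 2)]
  + (1/80 : ℚ) • ∑ σ : Equiv.Perm (Fin 3), ∑ α, ∑ β,
      G.corr 0 [![W1,W2,W3] (σ 0), G.gammaUp α, G.ga α, G.gammaUp β]
        * G.corr 1 [G.ga β, ![W1,W2,W3] (σ 1), ![W1,W2,W3] (σ 2)]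
  - (1/20 : ℚ) • ∑ σ : Equiv.Perm (Fin 3), ∑ α, ∑ β,
      G.corr 1 [![W1,W2,W3] (σ 0), G.ga α, G.ga β]
        * G.corr 0 [G.gammaUp α, G.gammaUp β, ![W1,W2,W3] (σ 1),
            ![W1,W2,W3] (σ 2)]
  + (1/60 : ℚ) • ∑ σ : Equiv.Perm (Fin 3), ∑ α,
      G.corr 1 [![W1,W2,W3] (σ 0), ![W1,W2,W3] (σ 1), G.ga α,
          G.qp (G.gammaUp α) (![W1,W2,W3] (σ 2))]
  - (1/120 : ℚ) • ∑ σ : Equiv.Perm (Fin 3), ∑ α,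
      G.corr 1 [![W1,W2,W3] (σ 0), G.gammaUp α, G.ga α,
          G.qp (![W1,W2,W3] (σ 1)) (![W1,W2,W3] (σ 2))]

/-- `ρ_{2;1}(W) := ⟨⟨T²(W)⟩⟩₂ − A₁(W)` (the Mumford genus-2 relation tensor). -/
def rho21 (W : X) : R := G.corr 2 [G.T (G.T W)] - G.A1 W

/-- `ρ_{2;2}(W,V) := ⟨⟨T(W)T(V)⟩⟩₂ − 3⟨⟨T(W•V)⟩⟩₂ − A₂(W,V)`
(Getzler's genus-2 relation tensor). -/
def rho22 (W V : X) : R :=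
  G.corr 2 [G.T W, G.T V] - 3 * G.corr 2 [G.T (G.qp W V)] - G.A2 W V

/-- The Belorousski–Pandharipande genus-2 relation tensor `ρ_{2;3}`. -/
def rho23 (W1 W2 W3 : X) : R :=
  2 * G.corr 2 [G.qp W1 (G.qp W2 W3)]
  - 2 * ∑ α, G.corr 0 [W1, W2, W3, G.gammaUp α] * G.corr 2 [G.T (G.ga α)]
  + ∑ σ : Equiv.Perm (Fin 3),
      (G.corr 2 [![W1,W2,W3] (σ 0),
          G.T (G.qp (![W1,W2,W3] (σ 1)) (![W1,W2,W3] (σ 2)))]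
       - G.corr 2 [G.T (![W1,W2,W3] (σ 0)),
          G.qp (![W1,W2,W3] (σ 1)) (![W1,W2,W3] (σ 2))])
  - G.B W1 W2 W3

end GW

/-! Applying the string equation with `W₂ = γ^α`, which is primary so that `τ₋(γ^α) = 0`, gives
`S • W = ⟨⟨τ₋(W) γ^α⟩⟩₀ γ_α + w` with `w` the level-0 part of `W`. The correction term of
`T(τ₋(W)) = τ₊τ₋(W) − ⟨⟨τ₋(W) γ^α⟩⟩₀ γ_α` cancels the sum, leaving `τ₊τ₋(W) + w = W`. -/

namespace GW

variable {R : Type} [CommRing R] {X : Type} [AddCommGroup X] [Module R X] {N : ℕ}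
  (G : GW R X N)

/-- The second derivative of the genus-0 string equation. -/
def StringEquation₂ : Prop :=
  ∀ W1 W2 : X, G.corr 0 [G.Svf, W1, W2]
    = G.corr 0 [G.tauMinus W1, W2] + G.corr 0 [W1, G.tauMinus W2] + G.eta (G.p0 W1) (G.p0 W2)

theorem comp_zero (n : ℕ) (β : Fin N) : G.comp 0 n β = 0 := by
  simpa using G.comp_smul 0 0 n β

theorem tauMinus_p0 (W : X) : G.tauMinus (G.p0 W) = 0 :=
  G.comp_ext _ _ fun n β => by simp [G.comp_tauMinus, G.comp_p0, G.comp_zero]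

theorem tauMinus_gammaUp (α : Fin N) : G.tauMinus (G.gammaUp α) = 0 := by
  rw [← G.gammaUp_primary, G.tauMinus_p0]

theorem corr_zero_cons (g : ℕ) (l : List X) : G.corr g (0 :: l) = 0 := by
  simpa using G.corr_smul g 0 0 l

theorem corr_pair_zero (g : ℕ) (V : X) : G.corr g [V, 0] = 0 := by
  rw [G.corr_perm g _ _ (List.Perm.swap _ _ _), G.corr_zero_cons]

theorem qp_Svf (hstring : G.StringEquation₂) (W : X) :
    G.qp G.Svf W = (∑ α, G.corr 0 [G.tauMinus W, G.gammaUp α] • G.ga α) + G.p0 W := by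
  have hterm (α : Fin N) : G.corr 0 [G.Svf, W, G.gammaUp α] • G.ga α
      = G.corr 0 [G.tauMinus W, G.gammaUp α] • G.ga α + G.eta W (G.gammaUp α) • G.ga α := by
    rw [hstring, G.tauMinus_gammaUp, G.corr_pair_zero, add_zero, ← G.eta_primary, add_smul]
  rw [qp, Finset.sum_congr rfl fun α _ => hterm α, Finset.sum_add_distrib, ← G.eta_dual W]
  rfl

end GW

theorem string_decomposition_general {R : Type} [CommRing R] {X : Type}
    [AddCommGroup X] [Module R X] {N : ℕ} (G : GW R X N)
    (hstring : ∀ W1 W2 : X,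
      G.corr 0 [G.Svf, W1, W2]
        = G.corr 0 [G.tauMinus W1, W2] + G.corr 0 [W1, G.tauMinus W2]
          + G.eta (G.p0 W1) (G.p0 W2)) :
    ∀ W : X, W = G.qp G.Svf W + G.T (G.tauMinus W) := by
  intro W
  calc W = G.tauPlus (G.tauMinus W) + G.p0 W := (G.tau_decomp W).symm
    _ = G.qp G.Svf W + G.T (G.tauMinus W) := by
      rw [G.qp_Svf hstring, GW.T]
      abel

/-- Every vector field `W` on the big phase space decomposes
as `W = S • W + T(τ₋(W))`, assuming the second-derivative string equation. -/
theorem string_decomposition {R : Type} [CommRing R] [Algebra ℚ R] {X : Type}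
    [AddCommGroup X] [Module R X] {N : ℕ} (G : GW R X N)
    (hstring : ∀ W1 W2 : X,
      G.corr 0 [G.Svf, W1, W2]
        = G.corr 0 [G.tauMinus W1, W2] + G.corr 0 [W1, G.tauMinus W2]
          + G.eta (G.p0 W1) (G.p0 W2)) :
    ∀ W : X, W = G.qp G.Svf W + G.T (G.tauMinus W) :=
  string_decomposition_general G hstring
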